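/- arXiv:1504.05155 — 8 statements merged into one kernel-verified Lean document; each statement's English description precedes it below -/
import Mathlib

section
/- Let G be a permutation of {0,1}^n and suppose there exists j such that for all x ∈ {0,1}^n, the Hamming weight of G(x) is congruent to |x| + j modulo k. Then either j ≡ 0 (mod k) or k = 2. -/
def hw {n : ℕ} (x : Fin n → Bool) : ℕ :=
  (Finset.univ.filter fun i => x i = true).card

lemma hw_pow {n : ℕ} (ω : ℂ) (x : Fin n → Bool) :
    ω ^ hw x = ∏ i : Fin n, (if x i = true then ω else 1) := by
  rw [Finset.prod_ite, Finset.prod_const, Finset.prod_const_one, mul_one, hw]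

lemma sum_hw_pow (n : ℕ) (ω : ℂ) :
    ∑ x : Fin n → Bool, ω ^ hw x = (1 + ω) ^ n := by
  have : ((1 : ℂ) + ω) ^ n = ∏ i : Fin n, ∑ b : Bool, (if b = true then ω else 1) := by
    simp [Fintype.sum_bool, add_comm]
  rw [this, Finset.prod_univ_sum]
  rw [Fintype.piFinset_univ]
  exact Finset.sum_congr rfl fun x _ => hw_pow ω x

theorem stmt_0 (n : ℕ) (k : ℕ) (j : ℤ) (hk : 1 ≤ k)
    (G : Equiv.Perm (Fin n → Bool))
    (h : ∀ x : Fin n → Bool, (hw (G x) : ℤ) ≡ (hw x : ℤ) + j [ZMOD (k : ℤ)]) :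
    j ≡ 0 [ZMOD (k : ℤ)] ∨ k = 2 := by
  rcases eq_or_ne k 1 with rfl | hk1
  · left; exact (Int.modEq_iff_dvd.mpr (by simp))
  rcases eq_or_ne k 2 with rfl | hk2
  · right; rfl
  left
  have hk0 : k ≠ 0 := by omega
  set ω : ℂ := Complex.exp (2 * Real.pi * Complex.I / k) with hω
  have hprim : IsPrimitiveRoot ω k := Complex.isPrimitiveRoot_exp k hk0
  have hωk : ω ^ k = 1 := hprim.pow_eq_one
  have hω0 : ω ≠ 0 := by
    intro h0
    rw [h0, zero_pow hk0] at hωk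
    exact zero_ne_one hωk
  -- 1 + ω ≠ 0
  have hne : (1 : ℂ) + ω ≠ 0 := by
    intro h0
    have hωm1 : ω = -1 := by linear_combination h0
    have : ω ^ 2 = 1 := by rw [hωm1]; ring
    have hdvd : k ∣ 2 := hprim.dvd_of_pow_eq_one 2 this
    have := Nat.le_of_dvd (by norm_num) hdvd
    omega
  -- congruence to equality of zpow
  have key : ∀ a b : ℤ, a ≡ b [ZMOD (k : ℤ)] → ω ^ a = ω ^ b := by
    intro a b hab
    obtain ⟨m, hm⟩ := Int.ModEq.dvd hab
    have : a = b + (k : ℤ) * (-m) := by linarith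
    rw [this, zpow_add₀ hω0, zpow_mul, zpow_natCast, hωk, one_zpow, mul_one]
  have hsum : ∑ x : Fin n → Bool, ω ^ (hw (G x) : ℤ) =
      ∑ x : Fin n → Bool, ω ^ ((hw x : ℤ) + j) :=
    Finset.sum_congr rfl fun x _ => key _ _ (h x)
  have hL : ∑ x : Fin n → Bool, ω ^ (hw (G x) : ℤ) = (1 + ω) ^ n := by
    rw [Equiv.sum_comp G (fun y => ω ^ (hw y : ℤ))]
    simpa [zpow_natCast] using sum_hw_pow n ω
  have hR : ∑ x : Fin n → Bool, ω ^ ((hw x : ℤ) + j) = ω ^ j * (1 + ω) ^ n := by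
    rw [← sum_hw_pow n ω, Finset.mul_sum]
    refine Finset.sum_congr rfl fun x _ => ?_
    rw [zpow_add₀ hω0, zpow_natCast, mul_comm]
  have heq : (1 + ω) ^ n = ω ^ j * (1 + ω) ^ n := hL.symm.trans (hsum.trans hR)
  have hωj : ω ^ j = 1 := by
    have hpn : ((1 : ℂ) + ω) ^ n ≠ 0 := pow_ne_zero n hne
    have h2 : (1 : ℂ) * (1 + ω) ^ n = ω ^ j * (1 + ω) ^ n := by rw [one_mul]; exact heq
    exact (mul_right_cancel₀ hpn h2).symm
  have : (k : ℤ) ∣ j := hprim.zpow_eq_one_iff_dvd j |>.mp hωj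
  exact Int.modEq_zero_iff_dvd.mpr this
end

section
/- Let G be a permutation of {0,1}^n that is not conservative (i.e., there exists x with |G(x)| ≠ |x|), and suppose that for all x, y ∈ {0,1}^n, G(x)·G(y) ≡ x·y (mod k), where k ≥ 2. Then k = 2. -/
def ip {n : ℕ} (x y : Fin n → Bool) : ℕ :=
  (Finset.univ.filter fun i => x i = true ∧ y i = true).card

namespace StmtAux

def e {n : ℕ} (j : Fin n) : Fin n → Bool := fun i => decide (i = j)

lemma ip_self {n : ℕ} (x : Fin n → Bool) : ip x x = hw x := by
  unfold ip hw; congr 1; ext i; simp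

lemma ip_comm {n : ℕ} (x y : Fin n → Bool) : ip x y = ip y x := by
  unfold ip; congr 1; ext i; simp [and_comm]

lemma ip_e {n : ℕ} (x : Fin n → Bool) (j : Fin n) : ip x (e j) = (x j).toNat := by
  unfold ip e
  rcases hx : x j with _ | _
  · rw [Finset.card_eq_zero.mpr]
    · rfl
    · ext i
      simp only [Finset.mem_filter, Finset.mem_univ, true_and, decide_eq_true_eq,
        Finset.notMem_empty, iff_false, not_and]
      rintro hi rfl; simp [hx] at hi
  · rw [show (Finset.univ.filter fun i => x i = true ∧ (decide (i = j)) = true) = {j} from ?_]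
    · rfl
    · ext i
      simp only [Finset.mem_filter, Finset.mem_univ, true_and, decide_eq_true_eq,
        Finset.mem_singleton]
      constructor
      · rintro ⟨_, rfl⟩; rfl
      · rintro rfl; exact ⟨hx, rfl⟩

lemma hw_e {n : ℕ} (j : Fin n) : hw (e j) = 1 := by
  rw [← ip_self, ip_e]; simp [e]

lemma modeq_eq {k a b : ℕ} (hab : a ≡ b [MOD k]) (ha : a < k) (hb : b < k) : a = b := by
  unfold Nat.ModEq at hab
  rwa [Nat.mod_eq_of_lt ha, Nat.mod_eq_of_lt hb] at hab

lemma hw_sum {n : ℕ} (x : Fin n → Bool) : hw x = ∑ i, (x i).toNat := by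
  unfold hw
  rw [Finset.card_filter]
  congr 1; ext i
  rcases x i <;> simp

end StmtAux

theorem stmt_1 (n : ℕ) (k : ℕ) (hk : 2 ≤ k)
    (G : Equiv.Perm (Fin n → Bool))
    (hnc : ∃ x : Fin n → Bool, hw (G x) ≠ hw x)
    (h : ∀ x y : Fin n → Bool, ip (G x) (G y) ≡ ip x y [MOD k]) :
    k = 2 := by
  open StmtAux in
  rcases eq_or_lt_of_le hk with h2 | h2
  · exact h2.symm
  exfalso
  obtain ⟨x0, hx0⟩ := hnc
  apply hx0
  have toNat_lt : ∀ b : Bool, b.toNat < k := by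
    intro b; rcases b <;> simp <;> omega
  -- B: (G.symm (e j)) i = (G (e i)) j
  have hB : ∀ (j i : Fin n), (G.symm (e j)) i = (G (e i)) j := by
    intro j i
    have h1 : ((G (e i)) j).toNat ≡ ((G.symm (e j)) i).toNat [MOD k] := by
      have := h (e i) (G.symm (e j))
      rw [Equiv.apply_symm_apply] at this
      rw [← ip_e (G (e i)) j, ← ip_e (G.symm (e j)) i, ← ip_comm (e i) (G.symm (e j))]
      exact this
    have := modeq_eq h1 (toNat_lt _) (toNat_lt _)
    rcases hb : (G (e i)) j <;> rcases hb' : (G.symm (e j)) i <;>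
      simp [hb, hb'] at this ⊢
  -- A: (G x) j ≡ ip x (columns) mod k
  have hA : ∀ (x : Fin n → Bool) (j : Fin n),
      ((G x) j).toNat ≡ ip x (fun i => (G (e i)) j) [MOD k] := by
    intro x j
    have hy : (fun i => (G (e i)) j) = G.symm (e j) := by
      funext i; exact (hB j i).symm
    rw [hy, ← ip_e (G x) j]
    have := h x (G.symm (e j))
    rwa [Equiv.apply_symm_apply] at this
  -- disjointness of column supports
  have hdisj : ∀ (j i i' : Fin n), (G (e i)) j = true → (G (e i')) j = true → i = i' := by
    intro j i i' hi hi'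
    by_contra hne
    set x2 : Fin n → Bool := fun t => decide (t = i) || decide (t = i') with hx2
    have hip : ip x2 (fun t => (G (e t)) j) = 2 := by
      have : (Finset.univ.filter fun t => x2 t = true ∧ (G (e t)) j = true) = {i, i'} := by
        ext t
        simp only [Finset.mem_filter, Finset.mem_univ, true_and, hx2, Bool.or_eq_true,
          decide_eq_true_eq, Finset.mem_insert, Finset.mem_singleton]
        constructor
        · rintro ⟨ht, _⟩; exact ht
        · rintro (rfl | rfl)
          · exact ⟨Or.inl rfl, hi⟩
          · exact ⟨Or.inr rfl, hi'⟩
      rw [ip, this, Finset.card_insert_of_notMem (by simpa using hne), Finset.card_singleton]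
    have := hA x2 j
    rw [hip] at this
    have h2k : (2 : ℕ) < k := h2
    have := modeq_eq this (toNat_lt _) h2k
    rcases hb : (G x2) j <;> simp [hb] at this
  -- each column nonempty
  have hne' : ∀ i : Fin n, ∃ j, (G (e i)) j = true := by
    intro i
    by_contra hno
    push_neg at hno
    have hz : hw (G (e i)) = 0 := by
      unfold hw
      rw [Finset.card_eq_zero.mpr]
      ext j; simp [hno j]
    have := h (e i) (e i)
    rw [ip_self, ip_self, hz, hw_e] at this
    have := modeq_eq this (by omega) (by omega)
    omega
  choose σ hσ using hne'
  have hinj : Function.Injective σ := by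
    intro i i' hii
    exact hdisj (σ i) i i' (hσ i) (hii ▸ hσ i')
  have hbij : Function.Bijective σ := Finite.injective_iff_bijective.mp hinj
  have key : ∀ (x : Fin n → Bool) (i : Fin n), (G x) (σ i) = x i := by
    intro x i
    have hip : ip x (fun t => (G (e t)) (σ i)) = (x i).toNat := by
      have hset : (Finset.univ.filter fun t => x t = true ∧ (G (e t)) (σ i) = true)
          = if x i = true then {i} else ∅ := by
        ext t
        simp only [Finset.mem_filter, Finset.mem_univ, true_and]
        constructor
        · rintro ⟨hxt, hgt⟩
          have : t = i := hdisj (σ i) t i hgt (hσ i)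
          subst this
          simp [hxt]
        · intro ht
          rcases hxi : x i with _ | _
          · simp [hxi] at ht
          · simp [hxi] at ht
            rw [ht]
            exact ⟨hxi, hσ i⟩
      rw [ip, hset]
      rcases hxi : x i <;> simp [hxi]
    have := hA x (σ i)
    rw [hip] at this
    have := modeq_eq this (toNat_lt _) (toNat_lt _)
    rcases hb : (G x) (σ i) <;> rcases hb' : x i <;> simp [hb, hb'] at this ⊢
  rw [hw_sum, hw_sum]
  exact (Fintype.sum_bijective σ hbij _ _ (fun i => (congrArg Bool.toNat (key x0 i)).symm)).symm
end

section
/- Every orthogonal gate is linear: if G is a permutation of {0,1}^n such that G(x)·G(y) ≡ x·y (mod 2) for all x, y, then G(x ⊕ y) = G(x) ⊕ G(y) for all x, y ∈ {0,1}^n. -/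
def f2 (b : Bool) : ZMod 2 := if b then 1 else 0

lemma f2_xor (a b : Bool) : f2 (xor a b) = f2 a + f2 b := by
  cases a <;> cases b <;> simp [f2] <;> decide

lemma ip_cast {n : ℕ} (x y : Fin n → Bool) :
    (ip x y : ZMod 2) = ∑ i, f2 (x i) * f2 (y i) := by
  rw [ip, Finset.card_filter]
  push_cast
  apply Finset.sum_congr rfl
  intro i _
  by_cases hx : x i <;> by_cases hy : y i <;> simp [hx, hy, f2]

theorem stmt_2 (n : ℕ) (G : Equiv.Perm (Fin n → Bool))
    (h : ∀ x y : Fin n → Bool, ip (G x) (G y) ≡ ip x y [MOD 2]) :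
    ∀ x y : Fin n → Bool,
      G (fun i => xor (x i) (y i)) = fun i => xor (G x i) (G y i) := by
  have h' : ∀ x y : Fin n → Bool,
      (∑ i, f2 (G x i) * f2 (G y i)) = ∑ i, f2 (x i) * f2 (y i) := by
    intro x y
    rw [← ip_cast, ← ip_cast]
    exact_mod_cast (ZMod.natCast_eq_natCast_iff _ _ _).mpr (h x y)
  intro x y
  set z : Fin n → Bool := fun j => xor (x j) (y j) with hz
  funext i
  have key : ∀ u : Fin n → Bool,
      (∑ j, f2 (xor (G z j) (xor (G x j) (G y j))) * f2 (u j)) = 0 := by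
    intro u
    obtain ⟨v, rfl⟩ := G.surjective u
    have : (∑ j, f2 (xor (G z j) (xor (G x j) (G y j))) * f2 (G v j))
        = (∑ j, f2 (G z j) * f2 (G v j)) + (∑ j, f2 (G x j) * f2 (G v j))
          + (∑ j, f2 (G y j) * f2 (G v j)) := by
      rw [← Finset.sum_add_distrib, ← Finset.sum_add_distrib]
      apply Finset.sum_congr rfl
      intro j _
      rw [f2_xor, f2_xor]; ring
    rw [this, h' z v, h' x v, h' y v]
    have hzv : (∑ j, f2 (z j) * f2 (v j))
        = (∑ j, f2 (x j) * f2 (v j)) + (∑ j, f2 (y j) * f2 (v j)) := by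
      rw [← Finset.sum_add_distrib]
      apply Finset.sum_congr rfl
      intro j _
      rw [hz]; rw [f2_xor]; ring
    rw [hzv]
    ring_nf
    have h2 : (2 : ZMod 2) = 0 := by decide
    rw [h2]; ring
  have hi := key (fun j => decide (j = i))
  rw [Finset.sum_eq_single i] at hi
  · simp only [decide_eq_true_eq] at hi
    have : f2 (xor (G z i) (xor (G x i) (G y i))) = 0 := by
      simpa [f2] using hi
    have hw : xor (G z i) (xor (G x i) (G y i)) = false := by
      by_contra hc
      simp [Bool.not_eq_false] at hc
      simp [hc, f2] at this
    revert hw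
    cases G z i <;> cases G x i <;> cases G y i <;> simp
  · intro j _ hj
    simp [hj, f2]
  · simp
end

section
/- If G(x) = Ax is a linear bijection of F₂ⁿ with A invertible and A not a permutation matrix, and G preserves Hamming weight mod k (|Ax| ≡ |x| (mod k) for all x ∈ {0,1}^n) for some k ≥ 2, then k = 2 or k = 4. -/
/-! Since `|x + y| = |x| + |y| - 2 |x * y|` (coordinatewise product), a linear map preserving
weights modulo `k` preserves the overlaps `|x * y|` modulo `m = k / gcd k 2`, and `m ≥ 3`
unless `k ∈ {2, 4}`. If a column `A eⱼ` had two ones, the vector `x` for which `A x` is the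
indicator of two of their rows would give `|A x * A eⱼ| = 2` but `|x * eⱼ| ≤ 1`, impossible
modulo `m ≥ 3`. So every column, being nonzero, is a standard basis vector, and `A` is a
permutation matrix. -/

def wt {n : ℕ} (v : Fin n → ZMod 2) : ℕ :=
  (Finset.univ.filter fun i => v i = 1).card

open Matrix

section Weight

variable {n : ℕ}

lemma wt_eq_sum_val (v : Fin n → ZMod 2) : wt v = ∑ i, (v i).val := by
  rw [wt, Finset.card_filter]
  exact Finset.sum_congr rfl fun i _ => by
    generalize v i = a
    decide +revert

lemma wt_add_add_two_mul_wt_mul (u v : Fin n → ZMod 2) :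
    wt (u + v) + 2 * wt (u * v) = wt u + wt v := by
  simp only [wt_eq_sum_val, Finset.mul_sum, ← Finset.sum_add_distrib]
  exact Finset.sum_congr rfl fun i _ => by
    simp only [Pi.add_apply, Pi.mul_apply]
    generalize u i = a
    generalize v i = b
    decide +revert

lemma wt_mul_le_right (u v : Fin n → ZMod 2) : wt (u * v) ≤ wt v := by
  simp only [wt_eq_sum_val]
  exact Finset.sum_le_sum fun i _ => by
    simp only [Pi.mul_apply]
    generalize u i = a
    generalize v i = b
    decide +revert

lemma wt_single_one (i : Fin n) : wt (Pi.single i (1 : ZMod 2)) = 1 := by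
  simp [wt, Pi.single_apply, Finset.filter_eq']

lemma wt_indicator (s : Finset (Fin n)) :
    wt (fun i => if i ∈ s then (1 : ZMod 2) else 0) = s.card := by
  simp [wt]

lemma exists_eq_single_of_wt_le_one {v : Fin n → ZMod 2} (hv : v ≠ 0) (h : wt v ≤ 1) :
    ∃ i, v = Pi.single i 1 := by
  have eq_one_of_ne_zero : ∀ a : ZMod 2, a ≠ 0 → a = 1 := by decide
  obtain ⟨i, hi⟩ := Function.ne_iff.mp hv
  have hi₁ := eq_one_of_ne_zero _ hi
  refine ⟨i, funext fun i' => ?_⟩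
  rw [Pi.single_apply]
  split_ifs with hi'
  · rw [hi', hi₁]
  · by_contra hne
    have hi'₁ := eq_one_of_ne_zero _ hne
    exact hi' (Finset.card_le_one.mp h i' (by simpa using hi'₁) i (by simpa using hi₁))

end Weight

lemma three_le_div_gcd_two {k : ℕ} (hk : 2 ≤ k) (h2 : k ≠ 2) (h4 : k ≠ 4) : 3 ≤ k / k.gcd 2 := by
  rcases Nat.even_or_odd k with he | ho
  · rw [Nat.gcd_eq_right he.two_dvd]
    obtain ⟨r, rfl⟩ := he
    omega
  · rw [Nat.coprime_two_right.mpr ho, Nat.div_one]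
    obtain ⟨r, rfl⟩ := ho
    omega

lemma wt_mulVec_mul_mulVec_modEq {m n k : ℕ} {A : Matrix (Fin m) (Fin n) (ZMod 2)} (hk : 0 < k)
    (h : ∀ x, wt (A *ᵥ x) ≡ wt x [MOD k]) (x y : Fin n → ZMod 2) :
    wt ((A *ᵥ x) * (A *ᵥ y)) ≡ wt (x * y) [MOD k / k.gcd 2] := by
  refine Nat.ModEq.cancel_left_div_gcd hk (Nat.ModEq.add_left_cancel (h (x + y)) ?_)
  rw [mulVec_add, wt_add_add_two_mul_wt_mul, wt_add_add_two_mul_wt_mul]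
  exact (h x).add (h y)

lemma wt_col_le_one {n m : ℕ} {A : Matrix (Fin n) (Fin n) (ZMod 2)} (hA : IsUnit A) (hm : 3 ≤ m)
    (h : ∀ x y, wt ((A *ᵥ x) * (A *ᵥ y)) ≡ wt (x * y) [MOD m]) (j : Fin n) :
    wt (A.col j) ≤ 1 := by
  by_contra! hj
  obtain ⟨s, hs, hs2⟩ :=
    Finset.exists_subset_card_eq (s := Finset.univ.filter fun i => A i j = 1) hj
  set z : Fin n → ZMod 2 := fun i => if i ∈ s then 1 else 0
  obtain ⟨x, hx⟩ := mulVec_surjective_iff_isUnit.mpr hA z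
  have hz : z * A.col j = z := funext fun i => by
    by_cases hi : i ∈ s
    · simpa [z, hi] using (Finset.mem_filter.mp (hs hi)).2
    · simp [z, hi]
  have hxj : wt (x * Pi.single j 1) ≤ 1 :=
    (wt_mul_le_right x (Pi.single j 1)).trans (wt_single_one j).le
  have hmod := h x (Pi.single j 1)
  rw [hx, mulVec_single_one, hz, wt_indicator, hs2] at hmod
  have := hmod.eq_of_lt_of_lt (by omega) (by omega)
  omega

lemma exists_perm_of_col_eq_single {ι R : Type*} [Fintype ι] [DecidableEq ι] [NonAssocSemiring R]
    [Nontrivial R] {A : Matrix ι ι R} (hA : Function.Injective A.mulVec)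
    (hcol : ∀ j, ∃ i, A.col j = Pi.single i 1) :
    ∃ σ : Equiv.Perm ι, ∀ i j, A i j = if σ j = i then 1 else 0 := by
  choose f hf using hcol
  have hf_inj : Function.Injective f := fun j₁ j₂ h => by
    have : A *ᵥ Pi.single j₁ 1 = A *ᵥ Pi.single j₂ 1 := by
      rw [mulVec_single_one, mulVec_single_one, hf, hf, h]
    have hj₁ := congrFun (hA this) j₁
    by_contra hne
    simp [hne] at hj₁
  refine ⟨Equiv.ofBijective f (Finite.injective_iff_bijective.mp hf_inj), fun i j => ?_⟩
  rw [← A.col_apply, hf, Pi.single_apply, Equiv.ofBijective_apply]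
  exact if_congr eq_comm rfl rfl

theorem stmt_7 (n : ℕ) (A : Matrix (Fin n) (Fin n) (ZMod 2)) (hA : IsUnit A)
    (hnp : ¬∃ σ : Equiv.Perm (Fin n), ∀ i j, A i j = if σ j = i then 1 else 0)
    (k : ℕ) (hk : 2 ≤ k)
    (h : ∀ x : Fin n → ZMod 2, wt (A.mulVec x) ≡ wt x [MOD k]) :
    k = 2 ∨ k = 4 := by
  by_contra! hk24
  have hinj := mulVec_injective_iff_isUnit.mpr hA
  have hwt := wt_col_le_one hA (three_le_div_gcd_two hk hk24.1 hk24.2)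
    (wt_mulVec_mul_mulVec_modEq (by omega) h)
  refine hnp (exists_perm_of_col_eq_single hinj fun j => exists_eq_single_of_wt_le_one ?_ (hwt j))
  rw [← mulVec_single_one, ← mulVec_zero A]
  exact hinj.ne (Pi.single_ne_zero_iff.mpr one_ne_zero)
end

section
/- An orthogonal matrix A over F₂ (satisfying AᵀA = I) preserves Hamming weight mod 4 if and only if every column of A has Hamming weight congruent to 1 mod 4. -/
lemma zmod2_cases : ∀ a : ZMod 2, a = 0 ∨ a = 1 := by decide

lemma wt_add {n : ℕ} (u v : Fin n → ZMod 2) :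
    wt (u + v) + 2 * (Finset.univ.filter fun i => u i = 1 ∧ v i = 1).card
      = wt u + wt v := by
  classical
  simp only [wt, Finset.card_filter, Finset.mul_sum, ← Finset.sum_add_distrib]
  apply Finset.sum_congr rfl
  intro i _
  rcases zmod2_cases (u i) with hu | hu <;> rcases zmod2_cases (v i) with hv | hv <;>
    simp only [Pi.add_apply, hu, hv] <;> decide

lemma card_inter_even {n : ℕ} (u v : Fin n → ZMod 2)
    (h : ∑ i, u i * v i = 0) :
    2 ∣ (Finset.univ.filter fun i => u i = 1 ∧ v i = 1).card := by
  classical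
  have hc : ((Finset.univ.filter fun i => u i = 1 ∧ v i = 1).card : ZMod 2)
      = ∑ i, u i * v i := by
    rw [Finset.card_filter]
    push_cast
    apply Finset.sum_congr rfl
    intro i _
    rcases zmod2_cases (u i) with hu | hu <;> rcases zmod2_cases (v i) with hv | hv <;>
      simp [hu, hv]
  rw [h] at hc
  exact (ZMod.natCast_eq_zero_iff _ 2).mp hc

theorem stmt_9 (n : ℕ) (A : Matrix (Fin n) (Fin n) (ZMod 2))
    (hA : A.transpose * A = 1) :
    (∀ x : Fin n → ZMod 2, wt (A.mulVec x) ≡ wt x [MOD 4]) ↔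
      ∀ i, wt (fun r => A r i) ≡ 1 [MOD 4] := by
  classical
  have horth : ∀ j k : Fin n, j ≠ k → ∑ r, A r j * A r k = 0 := by
    intro j k hjk
    have h := congrFun (congrFun hA j) k
    simpa [Matrix.mul_apply, Matrix.transpose_apply, Matrix.one_apply, hjk] using h
  constructor
  · intro h i
    have h0 := h (fun j => if j = i then 1 else 0)
    have h1 : A.mulVec (fun j => if j = i then 1 else 0) = fun r => A r i := by
      funext r
      simp [Matrix.mulVec, dotProduct]
    have h2 : wt (fun j => if j = i then (1 : ZMod 2) else 0) = 1 := by
      have : (Finset.univ.filter fun j =>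
          (if j = i then (1 : ZMod 2) else 0) = 1) = {i} := by
        ext j
        by_cases hj : j = i <;> simp [hj]
      simp [wt, this, Finset.filter_eq']
    rw [h1, h2] at h0
    exact h0
  · intro hcol x
    have key : ∀ s : Finset (Fin n),
        wt (fun r => ∑ j ∈ s, A r j) ≡ s.card [MOD 4] := by
      intro s
      induction s using Finset.induction_on with
      | empty => simp [wt, Nat.ModEq]
      | @insert k s hk ih =>
        set u : Fin n → ZMod 2 := fun r => ∑ j ∈ s, A r j with hu
        set v : Fin n → ZMod 2 := fun r => A r k with hv
        have hsum : (fun r => ∑ j ∈ insert k s, A r j) = u + v := by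
          funext r
          rw [Finset.sum_insert hk, Pi.add_apply]
          ring
        have hip : ∑ r, u r * v r = 0 := by
          have h1 : ∑ r, u r * v r = ∑ j ∈ s, ∑ r, A r j * A r k := by
            simp_rw [hu, hv, Finset.sum_mul]
            rw [Finset.sum_comm]
          rw [h1]
          apply Finset.sum_eq_zero
          intro j hj
          exact horth j k (fun h => hk (h ▸ hj))
        obtain ⟨m, hm⟩ := card_inter_even u v hip
        have hw := wt_add u v
        rw [hm] at hw
        have ihm : wt u % 4 = s.card % 4 := ih
        have hcolk : wt v % 4 = 1 % 4 := hcol k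
        rw [hsum, Finset.card_insert_of_notMem hk]
        show wt (u + v) % 4 = (s.card + 1) % 4
        omega
    have hx : A.mulVec x
        = fun r => ∑ j ∈ Finset.univ.filter (fun j => x j = 1), A r j := by
      funext r
      rw [Finset.sum_filter]
      simp only [Matrix.mulVec, dotProduct]
      apply Finset.sum_congr rfl
      intro j _
      rcases zmod2_cases (x j) with h | h <;> simp [h]
    rw [hx]
    exact key _
end

section
/- Every non-affine Boolean function on n ≥ 3 bits has a non-affine subfunction on n−1 bits: if f : {0,1}^n → {0,1} is not of the form f(x) = (a·x) ⊕ c (for a ∈ {0,1}^n, c ∈ {0,1}), then there is an index i and a bit value v such that the restriction of f obtained by fixing xᵢ = v is a non-affine function of the remaining n−1 bits. -/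
def IsAffine {α : Type} [Fintype α] (f : (α → ZMod 2) → ZMod 2) : Prop :=
  ∃ (a : α → ZMod 2) (c : ZMod 2), ∀ x, f x = (∑ i, a i * x i) + c

private lemma restrict_eval {n : ℕ} (f : (Fin n → ZMod 2) → ZMod 2) (i : Fin n) (v : ZMod 2)
    (a : {j : Fin n // j ≠ i} → ZMod 2) (c : ZMod 2)
    (h : ∀ y : {j : Fin n // j ≠ i} → ZMod 2,
      f (fun j => if h : j = i then v else y ⟨j, h⟩) = (∑ l, a l * y l) + c)
    (x : Fin n → ZMod 2) (hx : x i = v) :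
    f x = (∑ l : {j : Fin n // j ≠ i}, a l * x l.val) + c := by
  have := h (fun l => x l.val)
  have hfun : (fun j => if h : j = i then v else x j) = x := by
    funext j
    by_cases hj : j = i
    · simp [hj, hx]
    · simp [hj]
  rwa [hfun] at this

private lemma sum_indicator {n : ℕ} (i : Fin n) (a : {j : Fin n // j ≠ i} → ZMod 2)
    (j0 : Fin n) (hj : j0 ≠ i) :
    ∑ l : {j : Fin n // j ≠ i}, a l * (if l.val = j0 then (1 : ZMod 2) else 0)
      = a ⟨j0, hj⟩ := by
  rw [Finset.sum_eq_single (⟨j0, hj⟩ : {j : Fin n // j ≠ i})]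
  · simp
  · intro b _ hb
    have : b.val ≠ j0 := fun h => hb (Subtype.ext h)
    simp [this]
  · simp

theorem stmt_14 (n : ℕ) (hn : 3 ≤ n) (f : (Fin n → ZMod 2) → ZMod 2)
    (hf : ¬IsAffine f) :
    ∃ (i : Fin n) (v : ZMod 2),
      ¬IsAffine (fun y : {j : Fin n // j ≠ i} → ZMod 2 =>
        f (fun j => if h : j = i then v else y ⟨j, h⟩)) := by
  by_contra hcon
  push_neg at hcon
  apply hf
  set i0 : Fin n := ⟨0, by omega⟩ with hi0
  obtain ⟨a0, c0, h0⟩ := hcon i0 0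
  obtain ⟨a1, c1, h1⟩ := hcon i0 1
  -- Claim: a0 = a1
  have key : ∀ j : {j : Fin n // j ≠ i0}, a0 j = a1 j := by
    intro j
    set j0 : Fin n := j.val with hj0
    have hji : j0 ≠ i0 := j.2
    -- pick k distinct from i0 and j0
    obtain ⟨k, hki, hkj⟩ : ∃ k : Fin n, k ≠ i0 ∧ k ≠ j0 := by
      by_cases h1 : j0 = ⟨1, by omega⟩
      · exact ⟨⟨2, by omega⟩, by simp [hi0, Fin.ext_iff], by simp [h1, Fin.ext_iff]⟩
      · exact ⟨⟨1, by omega⟩, by simp [hi0, Fin.ext_iff], fun h => h1 h.symm⟩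
    obtain ⟨b, d, hb⟩ := hcon k 0
    -- four points
    set xZ : Fin n → ZMod 2 := fun _ => 0 with hxZ
    set xI : Fin n → ZMod 2 := fun m => if m = i0 then 1 else 0 with hxI
    set xJ : Fin n → ZMod 2 := fun m => if m = j0 then 1 else 0 with hxJ
    set xIJ : Fin n → ZMod 2 := fun m => xI m + xJ m with hxIJ
    have hIJval : ∀ m, xIJ m = if m = i0 then 1 else if m = j0 then 1 else 0 := by
      intro m
      by_cases h : m = i0
      · subst h; simp [hxIJ, hxI, hxJ, Ne.symm hji]
      · by_cases h2 : m = j0 <;> simp [hxIJ, hxI, hxJ, h, h2, hji]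
    -- f values via restrictions at i0
    have EqA : f xZ = c0 := by
      have := restrict_eval f i0 0 a0 c0 h0 xZ (by simp [hxZ])
      simpa [hxZ] using this
    have EqB : f xI = c1 := by
      have := restrict_eval f i0 1 a1 c1 h1 xI (by simp [hxI])
      have hz : ∀ l : {m : Fin n // m ≠ i0}, a1 l * xI l.val = 0 := by
        intro l; simp [hxI, l.2]
      simpa [Finset.sum_congr rfl (fun l _ => hz l)] using this
    have EqC : f xJ = a0 j + c0 := by
      have := restrict_eval f i0 0 a0 c0 h0 xJ (by simp [hxJ, Ne.symm hji])
      rw [this, hxJ]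
      rw [sum_indicator i0 a0 j0 hji]
    have EqD : f xIJ = a1 j + c1 := by
      have := restrict_eval f i0 1 a1 c1 h1 xIJ (by simp [hIJval])
      rw [this]
      have hs : ∀ l : {m : Fin n // m ≠ i0},
          a1 l * xIJ l.val = a1 l * (if l.val = j0 then (1 : ZMod 2) else 0) := by
        intro l; rw [hIJval]; simp [l.2]
      rw [Finset.sum_congr rfl (fun l _ => hs l), sum_indicator i0 a1 j0 hji]
    -- f values via restriction at k (value 0): all four points have x k = 0
    have Eq0 : f xZ = (∑ l : {m : Fin n // m ≠ k}, b l * xZ l.val) + d :=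
      restrict_eval f k 0 b d hb xZ (by simp [hxZ])
    have EqI : f xI = (∑ l : {m : Fin n // m ≠ k}, b l * xI l.val) + d :=
      restrict_eval f k 0 b d hb xI (by simp [hxI, hki])
    have EqJ : f xJ = (∑ l : {m : Fin n // m ≠ k}, b l * xJ l.val) + d :=
      restrict_eval f k 0 b d hb xJ (by simp [hxJ, hkj])
    have EqIJ : f xIJ = ((∑ l : {m : Fin n // m ≠ k}, b l * xI l.val)
        + ∑ l : {m : Fin n // m ≠ k}, b l * xJ l.val) + d := by
      have := restrict_eval f k 0 b d hb xIJ (by simp [hxIJ, hxI, hxJ, hki, hkj])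
      rw [this, ← Finset.sum_add_distrib]
      congr 1
      exact Finset.sum_congr rfl (fun l _ => by rw [hxIJ]; ring)
    -- combine
    have hzero : (∑ l : {m : Fin n // m ≠ k}, b l * xZ l.val) = 0 := by
      simp [hxZ]
    linear_combination -EqC + EqD + EqJ - EqIJ + EqI - EqB + EqA - Eq0 - hzero
  -- assemble affine representation of f
  refine ⟨fun m => if h : m = i0 then c0 + c1 else a0 ⟨m, h⟩, c0, fun x => ?_⟩
  have hsplit : ∀ (A : Fin n → ZMod 2),
      (∑ m, A m * x m) = A i0 * x i0 + ∑ l : {m : Fin n // m ≠ i0}, A l.val * x l.val := by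
    intro A
    rw [Fintype.sum_eq_add_sum_compl i0]
    congr 1
    exact Finset.sum_subtype _ (fun m => by simp) (fun m => A m * x m)
  rw [hsplit]
  have hA0 : ∀ l : {m : Fin n // m ≠ i0},
      (if h : l.val = i0 then c0 + c1 else a0 ⟨l.val, h⟩) * x l.val = a0 l * x l.val := by
    intro l
    rw [dif_neg l.2]
  rw [Finset.sum_congr rfl (fun l _ => hA0 l), dif_pos rfl]
  rcases (by decide : ∀ v : ZMod 2, v = 0 ∨ v = 1) (x i0) with hv | hv
  · rw [restrict_eval f i0 0 a0 c0 h0 x hv, hv]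
    ring
  · rw [restrict_eval f i0 1 a1 c1 h1 x hv, hv,
      Finset.sum_congr rfl (fun l _ => by rw [← key l])]
    have h2 : (2 : ZMod 2) = 0 := rfl
    linear_combination -c0 * h2
end

section
/- Any permutation of {0,1}^n induced by applying a reversible gate on at most n−1 of the n bits (acting as the identity on the rest) is an even permutation of {0,1}^n. -/
theorem stmt_15 (n m : ℕ) (hm : m < n) (g : Equiv.Perm (Fin m → Bool))
    (e : Fin m ↪ Fin n) (P : Equiv.Perm (Fin n → Bool))
    (hP : ∀ (x : Fin n → Bool) (j : Fin n),
      P x j = if h : ∃ i, e i = j then g (fun i => x (e i)) h.choose else x j) :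
    Equiv.Perm.sign P = 1 := by
  classical
  set pr : Fin n → Prop := fun j => ∃ i, e i = j with hpr
  have hE : Function.Bijective (fun i : Fin m => (⟨e i, ⟨i, rfl⟩⟩ : {j // pr j})) := by
    constructor
    · intro a b hab
      exact e.injective (congrArg Subtype.val hab)
    · rintro ⟨j, i, hi⟩
      exact ⟨i, Subtype.ext hi⟩
  let eqv : Fin m ≃ {j // pr j} := Equiv.ofBijective _ hE
  have heqv : ∀ i, (eqv i : Fin n) = e i := fun i => rfl
  let F : (Fin n → Bool) ≃ ((Fin m → Bool) × ({j // ¬ pr j} → Bool)) :=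
    (Equiv.piEquivPiSubtypeProd pr fun _ => Bool).trans
      (Equiv.prodCongr (Equiv.arrowCongr eqv.symm (Equiv.refl Bool)) (Equiv.refl _))
  let Q : Equiv.Perm ((Fin m → Bool) × ({j // ¬ pr j} → Bool)) :=
    Equiv.prodCongrLeft fun _ : ({j // ¬ pr j} → Bool) => g
  have hPQ : P = Equiv.permCongr F.symm Q := by
    apply Equiv.ext
    intro x
    funext j
    rw [hP]
    have hFx : F x = (fun i => x (e i), fun j => x j.1) := by
      simp only [F, Equiv.trans_apply, Equiv.piEquivPiSubtypeProd, Equiv.prodCongr_apply,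
        Equiv.coe_fn_mk, Prod.map]
      refine Prod.ext ?_ rfl
      funext i
      simp [Equiv.arrowCongr, heqv]
    have : Equiv.permCongr F.symm Q x j
        = F.symm (Q (F x)) j := rfl
    rw [this, hFx]
    have hQ : Q (fun i => x (e i), fun j => x j.1)
        = (g (fun i => x (e i)), fun j => x j.1) := Equiv.prodCongrLeft_apply _ _ _
    rw [hQ]
    by_cases h : pr j
    · have hsymm : F.symm (g (fun i => x (e i)), fun j => x j.1) j
          = g (fun i => x (e i)) (eqv.symm ⟨j, h⟩) := by
        simp [F, Equiv.piEquivPiSubtypeProd, Equiv.arrowCongr, h]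
      rw [hsymm, dif_pos h]
      have h1 : e (eqv.symm ⟨j, h⟩) = j := by
        have := heqv (eqv.symm ⟨j, h⟩)
        rw [Equiv.apply_symm_apply] at this
        exact this.symm
      have hch : h.choose = eqv.symm ⟨j, h⟩ :=
        e.injective (by rw [h1, h.choose_spec])
      rw [hch]
    · have hsymm : F.symm (g (fun i => x (e i)), fun j => x j.1) j = x j := by
        simp [F, Equiv.piEquivPiSubtypeProd, Equiv.arrowCongr, h]
      rw [hsymm, dif_neg h]
  rw [hPQ, Equiv.Perm.sign_permCongr]
  show Equiv.Perm.sign Q = 1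
  rw [Equiv.Perm.sign_prodCongrLeft, Finset.prod_const, Finset.card_univ]
  obtain ⟨j0, hj0⟩ : ∃ j, ¬ pr j := by
    by_contra hc
    push_neg at hc
    have hsurj : Function.Surjective e := fun j => hc j
    have := Fintype.card_le_of_surjective e hsurj
    simp only [Fintype.card_fin] at this
    omega
  have hpos : 0 < Fintype.card {j // ¬ pr j} := Fintype.card_pos_iff.mpr ⟨⟨j0, hj0⟩⟩
  have heven : Even (Fintype.card ({j // ¬ pr j} → Bool)) := by
    rw [Fintype.card_fun, Fintype.card_bool]
    exact Nat.even_pow.mpr ⟨even_two, hpos.ne'⟩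
  rcases Int.units_eq_one_or (Equiv.Perm.sign g) with h | h <;> rw [h]
  · simp
  · exact heven.neg_one_pow
end

section
/- If G is a permutation of {0,1}^n such that every output bit is a monotone Boolean function of the input, then G permutes the input bits: there is a permutation σ of {1,…,n} with G(x₁…xₙ) = x_{σ(1)}…x_{σ(n)} for all x. -/
theorem stmt_16 (n : ℕ) (G : Equiv.Perm (Fin n → Bool))
    (h : ∀ i : Fin n, Monotone (fun x : Fin n → Bool => G x i)) :
    ∃ σ : Equiv.Perm (Fin n), ∀ (x : Fin n → Bool) (i : Fin n), G x i = x (σ i) := by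
  classical
  have hmono : Monotone G := fun x y hxy => fun i => h i hxy
  -- counting argument: the inverse is monotone too
  have hinvmono : Monotone (G.symm : (Fin n → Bool) → (Fin n → Bool)) := by
    intro a b hab
    set S := {p : (Fin n → Bool) × (Fin n → Bool) // p.1 ≤ p.2}
    let f : S → S := fun p => ⟨(G p.1.1, G p.1.2), hmono p.2⟩
    have hf : Function.Injective f := by
      intro p q hpq
      have h1 : G p.1.1 = G q.1.1 := congrArg Prod.fst (congrArg Subtype.val hpq)
      have h2 : G p.1.2 = G q.1.2 := congrArg Prod.snd (congrArg Subtype.val hpq)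
      exact Subtype.ext (Prod.ext (G.injective h1) (G.injective h2))
    have hsurj : Function.Surjective f := Finite.surjective_of_injective hf
    obtain ⟨p, hp⟩ := hsurj ⟨(a, b), hab⟩
    have h1 : G p.1.1 = a := congrArg Prod.fst (congrArg Subtype.val hp)
    have h2 : G p.1.2 = b := congrArg Prod.snd (congrArg Subtype.val hp)
    have : G.symm a = p.1.1 := by rw [← h1, Equiv.symm_apply_apply]
    have h2' : G.symm b = p.1.2 := by rw [← h2, Equiv.symm_apply_apply]
    rw [this, h2']
    exact p.2
  let F : (Fin n → Bool) ≃o (Fin n → Bool) := G.toOrderIso hmono hinvmono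
  have hF : ∀ x, F x = G x := fun x => rfl
  -- the atoms
  let e : Fin n → (Fin n → Bool) := fun i => Function.update ⊥ i true
  have hTrueAtom : IsAtom (true : Bool) := by
    constructor
    · decide
    · decide
  have hAtomBool : ∀ a : Bool, IsAtom a ↔ a = true := by
    intro a
    cases a
    · simp only [Bool.false_eq_true, iff_false]
      intro hc; exact hc.1 rfl
    · simp [hTrueAtom]
  have hAtoms : ∀ y : Fin n → Bool, IsAtom y ↔ ∃ i, y = e i := by
    intro y
    rw [Pi.isAtom_iff_eq_single]
    constructor
    · rintro ⟨i, a, ha, rfl⟩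
      exact ⟨i, by rw [(hAtomBool a).1 ha]⟩
    · rintro ⟨i, rfl⟩
      exact ⟨i, true, hTrueAtom, rfl⟩
  have hle : ∀ (j : Fin n) (y : Fin n → Bool), e j ≤ y ↔ y j = true := by
    intro j y
    constructor
    · intro hy
      have := hy j
      simp only [e, Function.update_self] at this
      exact (le_antisymm this (Bool.le_true _)).symm
    · intro hy
      intro k
      by_cases hk : k = j
      · subst hk; simp [e, hy]
      · simp [e, Function.update_of_ne hk]
  have heinj : Function.Injective e := by
    intro i j hij
    by_contra hne
    have : e i i = e j i := congrFun hij i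
    simp [e, Function.update_of_ne hne] at this
  -- G maps atoms to atoms
  have key : ∀ i : Fin n, ∃ j, G (e i) = e j := by
    intro i
    have : IsAtom (F (e i)) := (F.isAtom_iff (e i)).2 ((hAtoms (e i)).2 ⟨i, rfl⟩)
    rw [hF] at this
    exact (hAtoms _).1 this
  choose t ht using key
  have htinj : Function.Injective t := by
    intro i j hij
    apply heinj
    apply G.injective
    rw [ht i, ht j, hij]
  let τ : Equiv.Perm (Fin n) := Equiv.ofBijective t (Finite.injective_iff_bijective.1 htinj)
  refine ⟨τ.symm, fun x i => ?_⟩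
  have hτ : t (τ.symm i) = i := τ.apply_symm_apply i
  rw [Bool.eq_iff_iff]
  constructor
  · intro hx
    have h1 : e i ≤ G x := (hle i (G x)).2 hx
    rw [← hτ, ← ht (τ.symm i)] at h1
    have h2 : F (e (τ.symm i)) ≤ F x := by rw [hF, hF]; exact h1
    exact (hle _ x).1 (F.le_iff_le.1 h2)
  · intro hx
    have h1 : e (τ.symm i) ≤ x := (hle _ x).2 hx
    have h2 : F (e (τ.symm i)) ≤ F x := F.monotone h1
    rw [hF, hF, ht (τ.symm i), hτ] at h2
    exact (hle i (G x)).1 h2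
end
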